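/- arXiv:2501.05134 — 8 statements merged into one kernel-verified Lean document; each statement's English description precedes it below -/
import Mathlib

section
/- Let ρ₁, ρ₂ > 0, m₁, m₂ ∈ ℝ^d, λ ∈ [0,1], and set ρ̄ = λρ₁ + (1−λ)ρ₂, m̄ = λm₁ + (1−λ)m₂. Define the kinetic trace defect K = λ|m₁|²/ρ₁ + (1−λ)|m₂|²/ρ₂ − |m̄|²/ρ̄ and the pressure defect q = λ·p(ρ₁) + (1−λ)·p(ρ₂) − p(ρ̄). Then K ≥ 0, q ≥ 0, and λ·E(ρ₁, m₁) + (1−λ)·E(ρ₂, m₂) − E(ρ̄, m̄) ≥ min{1/2, 1/(d(γ−1))} · (K + d·q). -/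
lemma sq_div_convex (ρ₁ ρ₂ x₁ x₂ l : ℝ) (hρ₁ : 0 < ρ₁) (hρ₂ : 0 < ρ₂)
    (hl0 : 0 ≤ l) (hl1 : l ≤ 1) (hρ : 0 < l * ρ₁ + (1 - l) * ρ₂) :
    (l * x₁ + (1 - l) * x₂) ^ 2 / (l * ρ₁ + (1 - l) * ρ₂)
      ≤ l * x₁ ^ 2 / ρ₁ + (1 - l) * x₂ ^ 2 / ρ₂ := by
  rw [div_add_div _ _ hρ₁.ne' hρ₂.ne', div_le_div_iff₀ hρ (by positivity)]
  nlinarith [mul_nonneg (mul_nonneg hl0 (sub_nonneg.2 hl1)) (sq_nonneg (x₁ * ρ₂ - x₂ * ρ₁)),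
    mul_pos hρ₁ hρ₂]

/-- Pointwise compatibility inequality between the convex-combination energy defect and
the trace `K + d·q` of the new Reynolds stress. -/
theorem energy_defect_controls_trace (d : ℕ) (hd : 1 ≤ d)
    (a γ : ℝ) (ha : 0 < a) (hγ : 1 < γ)
    (ρ₁ ρ₂ : ℝ) (hρ₁ : 0 < ρ₁) (hρ₂ : 0 < ρ₂)
    (m₁ m₂ : EuclideanSpace ℝ (Fin d))
    (l : ℝ) (hl0 : 0 ≤ l) (hl1 : l ≤ 1) :
    let ρ : ℝ := l * ρ₁ + (1 - l) * ρ₂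
    let m : EuclideanSpace ℝ (Fin d) := l • m₁ + (1 - l) • m₂
    let K : ℝ := l * ‖m₁‖ ^ 2 / ρ₁ + (1 - l) * ‖m₂‖ ^ 2 / ρ₂ - ‖m‖ ^ 2 / ρ
    let q : ℝ := l * (a * ρ₁ ^ γ) + (1 - l) * (a * ρ₂ ^ γ) - a * ρ ^ γ
    0 ≤ K ∧ 0 ≤ q ∧
      l * (‖m₁‖ ^ 2 / (2 * ρ₁) + a / (γ - 1) * ρ₁ ^ γ)
          + (1 - l) * (‖m₂‖ ^ 2 / (2 * ρ₂) + a / (γ - 1) * ρ₂ ^ γ)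
          - (‖m‖ ^ 2 / (2 * ρ) + a / (γ - 1) * ρ ^ γ)
        ≥ min (1 / 2) (1 / (d * (γ - 1))) * (K + d * q) := by
  intro ρ m K q
  have hl1' : 0 ≤ 1 - l := sub_nonneg.2 hl1
  have hρ : 0 < ρ := by
    rcases eq_or_lt_of_le hl0 with h | h
    · simpa [ρ, ← h] using hρ₂
    · have : 0 < l * ρ₁ := mul_pos h hρ₁
      have : 0 ≤ (1 - l) * ρ₂ := mul_nonneg hl1' hρ₂.le
      simp only [ρ]; linarith
  -- norm bound
  have hm : ‖m‖ ≤ l * ‖m₁‖ + (1 - l) * ‖m₂‖ := by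
    calc ‖m‖ ≤ ‖l • m₁‖ + ‖(1 - l) • m₂‖ := norm_add_le _ _
    _ = l * ‖m₁‖ + (1 - l) * ‖m₂‖ := by
        rw [norm_smul, norm_smul, Real.norm_of_nonneg hl0, Real.norm_of_nonneg hl1']
  have hm2 : ‖m‖ ^ 2 ≤ (l * ‖m₁‖ + (1 - l) * ‖m₂‖) ^ 2 := by
    have := norm_nonneg m
    nlinarith
  have hK : 0 ≤ K := by
    have h1 : ‖m‖ ^ 2 / ρ ≤ (l * ‖m₁‖ + (1 - l) * ‖m₂‖) ^ 2 / ρ := by gcongr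
    have h2 := sq_div_convex ρ₁ ρ₂ ‖m₁‖ ‖m₂‖ l hρ₁ hρ₂ hl0 hl1 hρ
    simp only [K, mul_div_assoc] at *
    linarith
  have hq : 0 ≤ q := by
    have hc := (convexOn_rpow hγ.le).2 (Set.mem_Ici.2 hρ₁.le) (Set.mem_Ici.2 hρ₂.le)
      hl0 hl1' (by ring)
    simp only [smul_eq_mul] at hc
    have : ρ ^ γ ≤ l * ρ₁ ^ γ + (1 - l) * ρ₂ ^ γ := hc
    have := sub_nonneg.2 this
    simp only [q]
    nlinarith
  refine ⟨hK, hq, ?_⟩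
  have hγ1 : (0:ℝ) < γ - 1 := by linarith
  have hd0 : (0:ℝ) < (d:ℝ) := by exact_mod_cast Nat.pos_of_ne_zero (by omega)
  -- energy defect equals K/2 + q/(γ-1)
  have hid : l * (‖m₁‖ ^ 2 / (2 * ρ₁) + a / (γ - 1) * ρ₁ ^ γ)
          + (1 - l) * (‖m₂‖ ^ 2 / (2 * ρ₂) + a / (γ - 1) * ρ₂ ^ γ)
          - (‖m‖ ^ 2 / (2 * ρ) + a / (γ - 1) * ρ ^ γ)
      = K / 2 + q / (γ - 1) := by
    simp only [K, q]
    field_simp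
    ring
  rw [hid]
  set c := min (1 / 2) (1 / ((d:ℝ) * (γ - 1))) with hc
  have hc2 : c ≤ 1 / 2 := min_le_left _ _
  have hcd : c * d ≤ 1 / (γ - 1) := by
    have h := min_le_right (1 / 2) (1 / ((d:ℝ) * (γ - 1)))
    have : c * d ≤ (1 / ((d:ℝ) * (γ - 1))) * d := by
      exact mul_le_mul_of_nonneg_right h hd0.le
    calc c * d ≤ (1 / ((d:ℝ) * (γ - 1))) * d := this
      _ = 1 / (γ - 1) := by field_simp
  have hc0 : 0 ≤ c := le_min (by norm_num) (by positivity)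
  have h1 : c * K ≤ K / 2 := by
    have := mul_le_mul_of_nonneg_right hc2 hK
    linarith
  have h2 : c * ((d:ℝ) * q) ≤ q / (γ - 1) := by
    have : c * ((d:ℝ) * q) = (c * d) * q := by ring
    rw [this]
    have := mul_le_mul_of_nonneg_right hcd hq
    rw [div_eq_mul_inv, ← one_div]
    linarith
  have : c * (K + d * q) = c * K + c * ((d:ℝ) * q) := by ring
  linarith [h1, h2, this.le, this.ge]
end

section
/- Let E₀ ≥ 0, T ≥ 0 and δ > 0, and let f, g : [0,∞) → ℝ be nonincreasing with 0 ≤ f(t) ≤ E₀ and 0 ≤ g(t) ≤ E₀ for all t. Suppose f(t) = g(t) for all t ∈ [0,T] and g(t) < f(t) for all t ∈ (T, T+δ). Then there exists λ̄ > 0 such that for every λ ≥ λ̄, ∫₀^∞ exp(−λt)·g(t) dt < ∫₀^∞ exp(−λt)·f(t) dt. -/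
/-! Put `h = f - g`: it vanishes on `[0, T]`, is positive on `(T, T + δ)` and bounded by `E₀`.
Split its Laplace transform at `b = T + δ`. The part over `(T, b)` is at least `e^{-λb} m` with
`m = ∫_T^b h > 0`, while the tail over `[b, ∞)` is at most `E₀ e^{-λb} / λ` in absolute value,
so the transform is positive as soon as `λ > E₀ / m`. -/

open MeasureTheory Set Filter

section LaplaceTransform

variable {h : ℝ → ℝ} {lam C : ℝ}

lemma integrableOn_exp_neg_mul_mul {a : ℝ} (hlam : 0 < lam)
    (hmeas : AEStronglyMeasurable h (volume.restrict (Ioi a))) (hC : ∀ t > a, ‖h t‖ ≤ C) :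
    IntegrableOn (fun t => Real.exp (-lam * t) * h t) (Ioi a) :=
  (exp_neg_integrableOn_Ioi a hlam).mul_bdd hmeas ((ae_restrict_mem measurableSet_Ioi).mono hC)

lemma norm_setIntegral_Ici_exp_neg_mul_mul_le {b : ℝ} (hlam : 0 < lam)
    (hC : ∀ t ≥ b, ‖h t‖ ≤ C) :
    ‖∫ t in Ici b, Real.exp (-lam * t) * h t‖ ≤ C * Real.exp (-lam * b) / lam := by
  have hexp : IntegrableOn (fun t => C * Real.exp (-lam * t)) (Ici b) :=
    (integrableOn_Ici_iff_integrableOn_Ioi).2 ((exp_neg_integrableOn_Ioi b hlam).const_mul C)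
  calc ‖∫ t in Ici b, Real.exp (-lam * t) * h t‖
      ≤ ∫ t in Ici b, C * Real.exp (-lam * t) := by
        refine norm_integral_le_of_norm_le hexp ?_
        filter_upwards [ae_restrict_mem measurableSet_Ici] with t ht
        rw [norm_mul, Real.norm_of_nonneg (Real.exp_pos _).le, mul_comm]
        exact mul_le_mul_of_nonneg_right (hC t ht) (Real.exp_pos _).le
    _ = C * Real.exp (-lam * b) / lam := by
        rw [integral_Ici_eq_integral_Ioi, integral_const_mul,
          integral_exp_mul_Ioi (neg_lt_zero.2 hlam)]
        field_simp

lemma exp_neg_mul_mul_setIntegral_le {s : Set ℝ} {b : ℝ} (hs : MeasurableSet s)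
    (hlam : 0 ≤ lam) (hsb : s ⊆ Iic b) (hnonneg : ∀ t ∈ s, 0 ≤ h t)
    (hint : IntegrableOn (fun t => Real.exp (-lam * t) * h t) s) :
    Real.exp (-lam * b) * ∫ t in s, h t ≤ ∫ t in s, Real.exp (-lam * t) * h t := by
  rw [← integral_const_mul]
  refine integral_mono_of_nonneg ?_ hint ?_ <;>
    filter_upwards [ae_restrict_mem hs] with t ht
  · exact mul_nonneg (Real.exp_pos _).le (hnonneg t ht)
  · refine mul_le_mul_of_nonneg_right (Real.exp_le_exp.2 ?_) (hnonneg t ht)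
    nlinarith [mem_Iic.1 (hsb ht)]

lemma setIntegral_Ioo_pos_of_pos {a b : ℝ} (hab : a < b)
    (hmeas : AEStronglyMeasurable h (volume.restrict (Ioo a b))) (hC : ∀ t ∈ Ioo a b, ‖h t‖ ≤ C)
    (hpos : ∀ t ∈ Ioo a b, 0 < h t) : 0 < ∫ t in Ioo a b, h t := by
  have hint : IntegrableOn h (Ioo a b) :=
    (integrableOn_const (C := C) measure_Ioo_lt_top.ne).mono' hmeas
      ((ae_restrict_mem measurableSet_Ioo).mono hC)
  have hsupp : Ioo a b ⊆ Function.support h := fun t ht => (hpos t ht).ne'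
  rw [setIntegral_pos_iff_support_of_nonneg_ae
      ((ae_restrict_mem measurableSet_Ioo).mono fun t ht => (hpos t ht).le) hint,
    inter_eq_self_of_subset_right hsupp, Real.volume_Ioo]
  simpa using hab

theorem eventually_pos_setIntegral_exp_neg_mul_mul {a b : ℝ} (hab : a < b)
    (hmeas : AEStronglyMeasurable h (volume.restrict (Ioi a))) (hC : ∀ t > a, ‖h t‖ ≤ C)
    (hpos : ∀ t ∈ Ioo a b, 0 < h t) :
    ∀ᶠ lam in atTop, 0 < ∫ t in Ioi a, Real.exp (-lam * t) * h t := by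
  set m := ∫ t in Ioo a b, h t
  have hm : 0 < m := setIntegral_Ioo_pos_of_pos hab (hmeas.mono_set Ioo_subset_Ioi_self)
    (fun t ht => hC t ht.1) hpos
  filter_upwards [eventually_gt_atTop 0, eventually_gt_atTop (C / m)] with lam hlam hlamC
  have hint := integrableOn_exp_neg_mul_mul hlam hmeas hC
  have hhead := exp_neg_mul_mul_setIntegral_le measurableSet_Ioo hlam.le
    (fun t ht => mem_Iic.2 ht.2.le) (fun t ht => (hpos t ht).le) (hint.mono_set Ioo_subset_Ioi_self)
  have htail := norm_setIntegral_Ici_exp_neg_mul_mul_le (b := b) hlam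
    (fun t ht => hC t (hab.trans_le ht))
  have hdom : C * Real.exp (-lam * b) / lam < Real.exp (-lam * b) * m := by
    have hCm : C / lam < m := (div_lt_iff₀ hlam).2 (by linarith [(div_lt_iff₀ hm).1 hlamC])
    calc C * Real.exp (-lam * b) / lam = Real.exp (-lam * b) * (C / lam) := by ring
      _ < Real.exp (-lam * b) * m := mul_lt_mul_of_pos_left hCm (Real.exp_pos _)
  rw [← Ioo_union_Ici_eq_Ioi hab,
    setIntegral_union ((Iio_disjoint_Ici le_rfl).mono_left Ioo_subset_Iio_self) measurableSet_Ici
        (hint.mono_set Ioo_subset_Ioi_self) (hint.mono_set (Ici_subset_Ioi.2 hab))]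
  linarith [neg_abs_le (∫ t in Ici b, Real.exp (-lam * t) * h t), Real.norm_eq_abs
    (∫ t in Ici b, Real.exp (-lam * t) * h t)]

end LaplaceTransform

theorem laplace_strict_comparison_general (E₀ : ℝ)
    (T : ℝ) (hT : 0 ≤ T) (δ : ℝ) (hδ : 0 < δ)
    (f g : ℝ → ℝ)
    (hf_mono : AntitoneOn f (Set.Ici 0)) (hg_mono : AntitoneOn g (Set.Ici 0))
    (hf_bd : ∀ t, 0 ≤ t → 0 ≤ f t ∧ f t ≤ E₀)
    (hg_bd : ∀ t, 0 ≤ t → 0 ≤ g t ∧ g t ≤ E₀)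
    (heq : ∀ t, 0 ≤ t → t ≤ T → f t = g t)
    (hlt : ∀ t, T < t → t < T + δ → g t < f t) :
    ∃ lam₀ > (0:ℝ), ∀ lam, lam₀ ≤ lam →
      (∫ t in Set.Ici (0:ℝ), Real.exp (-lam * t) * g t)
        < ∫ t in Set.Ici (0:ℝ), Real.exp (-lam * t) * f t := by
  have hmeas {φ : ℝ → ℝ} {a : ℝ} (ha : 0 ≤ a) (hφ : AntitoneOn φ (Ici 0)) :
      AEStronglyMeasurable φ (volume.restrict (Ioi a)) :=
    (aemeasurable_restrict_of_antitoneOn measurableSet_Ioi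
      (hφ.mono (Ioi_subset_Ici ha))).aestronglyMeasurable
  have hint {φ : ℝ → ℝ} {lam : ℝ} (hlam : 0 < lam) (hφ : AntitoneOn φ (Ici 0))
      (hφ_bd : ∀ t, 0 ≤ t → 0 ≤ φ t ∧ φ t ≤ E₀) :
      IntegrableOn (fun t => Real.exp (-lam * t) * φ t) (Ici 0) :=
    (integrableOn_Ici_iff_integrableOn_Ioi).2 <| integrableOn_exp_neg_mul_mul hlam
      (hmeas le_rfl hφ) fun t ht => by
        rw [Real.norm_of_nonneg (hφ_bd t ht.le).1]; exact (hφ_bd t ht.le).2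
  have hdiff : ∀ᶠ lam in atTop, 0 < ∫ t in Ioi T, Real.exp (-lam * t) * (f - g) t := by
    refine eventually_pos_setIntegral_exp_neg_mul_mul (C := E₀) (b := T + δ) (by linarith)
      ((hmeas hT hf_mono).sub (hmeas hT hg_mono)) (fun t ht => ?_) fun t ht => ?_
    · have h0t : 0 ≤ t := hT.trans ht.le
      exact abs_sub_le_of_nonneg_of_le (hf_bd t h0t).1 (hf_bd t h0t).2 (hg_bd t h0t).1
        (hg_bd t h0t).2
    · exact sub_pos.2 (hlt t ht.1 ht.2)
  obtain ⟨lam₁, hlam₁⟩ := (hdiff.and (eventually_gt_atTop 0)).exists_forall_of_atTop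
  refine ⟨max lam₁ 1, by positivity, fun lam hlam => ?_⟩
  obtain ⟨hpos, hlam0⟩ := hlam₁ lam (le_of_max_le_left hlam)
  rw [← sub_pos, ← integral_sub (hint hlam0 hf_mono hf_bd) (hint hlam0 hg_mono hg_bd),
    setIntegral_eq_of_subset_of_forall_sdiff_eq_zero measurableSet_Ici (Ioi_subset_Ici hT)
      fun t ht => by rw [heq t ht.1 (not_lt.1 ht.2), sub_self]]
  simpa only [Pi.sub_apply, mul_sub] using hpos

/-- Inequality (IN): if two nonincreasing energy profiles with values in `[0, E₀]` agree on
`[0,T]` and `g < f` on `(T, T+δ)`, then the Laplace transform of `g` is strictly smaller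
than that of `f` for all sufficiently large `λ`. -/
theorem laplace_strict_comparison (E₀ : ℝ) (hE₀ : 0 ≤ E₀)
    (T : ℝ) (hT : 0 ≤ T) (δ : ℝ) (hδ : 0 < δ)
    (f g : ℝ → ℝ)
    (hf_mono : AntitoneOn f (Set.Ici 0)) (hg_mono : AntitoneOn g (Set.Ici 0))
    (hf_bd : ∀ t, 0 ≤ t → 0 ≤ f t ∧ f t ≤ E₀)
    (hg_bd : ∀ t, 0 ≤ t → 0 ≤ g t ∧ g t ≤ E₀)
    (heq : ∀ t, 0 ≤ t → t ≤ T → f t = g t)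
    (hlt : ∀ t, T < t → t < T + δ → g t < f t) :
    ∃ lam₀ > (0:ℝ), ∀ lam, lam₀ ≤ lam →
      (∫ t in Set.Ici (0:ℝ), Real.exp (-lam * t) * g t)
        < ∫ t in Set.Ici (0:ℝ), Real.exp (-lam * t) * f t :=
  laplace_strict_comparison_general E₀ T hT δ hδ f g hf_mono hg_mono hf_bd hg_bd heq hlt
end

section
/- Let X be a real normed space and F : X → ℝ convex and continuous. Let (A_n) be a sequence of subsets of X and A ⊆ X, satisfying the two Mosco conditions: (i) for every x ∈ A there exists a sequence (x_n) with x_n ∈ A_n for all n and ‖x_n − x‖ → 0; (ii) whenever x_n ∈ A_n for all n and (x_n) converges weakly to some x ∈ X, then x ∈ A. Suppose u_n ∈ A_n minimizes F over A_n for every n (i.e. F(u_n) ≤ F(w) for all w ∈ A_n), and (u_n) converges weakly to u ∈ X. Then u ∈ A and u minimizes F over A, i.e. F(u) ≤ F(y) for all y ∈ A. -/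
open Filter

/-- Closed-graph property of the argmin map under Mosco convergence: weak limits of
minimizers of a continuous convex functional over Mosco-converging sets minimize over the
limit set. -/
theorem mosco_argmin_closed {X : Type*} [NormedAddCommGroup X] [NormedSpace ℝ X]
    (F : X → ℝ) (hF_convex : ConvexOn ℝ Set.univ F) (hF_cont : Continuous F)
    (A : Set X) (An : ℕ → Set X)
    (hM1 : ∀ x ∈ A, ∃ xn : ℕ → X, (∀ n, xn n ∈ An n) ∧
      Tendsto (fun n => ‖xn n - x‖) atTop (nhds 0))
    (hM2 : ∀ (xn : ℕ → X) (x : X), (∀ n, xn n ∈ An n) →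
      (∀ ℓ : X →L[ℝ] ℝ, Tendsto (fun n => ℓ (xn n)) atTop (nhds (ℓ x))) → x ∈ A)
    (u : ℕ → X) (hu_mem : ∀ n, u n ∈ An n)
    (hu_min : ∀ n, ∀ w ∈ An n, F (u n) ≤ F w)
    (ulim : X)
    (hu_weak : ∀ ℓ : X →L[ℝ] ℝ, Tendsto (fun n => ℓ (u n)) atTop (nhds (ℓ ulim))) :
    ulim ∈ A ∧ ∀ y ∈ A, F ulim ≤ F y := by
  have hA : ulim ∈ A := hM2 u ulim hu_mem hu_weak
  refine ⟨hA, ?_⟩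
  -- strict epigraph is open and convex
  set S : Set (X × ℝ) := {p : X × ℝ | F p.1 < p.2} with hS
  have hSopen : IsOpen S := isOpen_lt (hF_cont.comp continuous_fst) continuous_snd
  have hSconv : Convex ℝ S := by
    intro p hp q hq a b ha hb hab
    simp only [hS, Set.mem_setOf_eq] at hp hq ⊢
    have h1 : F (a • p.1 + b • q.1) ≤ a * F p.1 + b * F q.1 :=
      hF_convex.2 (Set.mem_univ _) (Set.mem_univ _) ha hb hab
    have h2 : a * F p.1 + b * F q.1 < a * p.2 + b * q.2 := by
      rcases ha.lt_or_eq with ha' | ha'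
      · have h3 := mul_lt_mul_of_pos_left hp ha'
        have h4 := mul_le_mul_of_nonneg_left hq.le hb
        linarith
      · have hb1 : b = 1 := by linarith
        rw [← ha', hb1]; ring_nf; linarith
    calc F (a • p + b • q).1 ≤ a * F p.1 + b * F q.1 := by simpa using h1
      _ < a * p.2 + b * q.2 := h2
      _ = (a • p + b • q).2 := by simp [Prod.smul_def, smul_eq_mul]
  have hnot : (ulim, F ulim) ∉ S := by simp [hS]
  obtain ⟨f, hf⟩ := geometric_hahn_banach_open_point hSconv hSopen hnot
  -- decompose f
  set ℓ : X →L[ℝ] ℝ := f.comp (ContinuousLinearMap.inl ℝ X ℝ) with hℓ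
  set c : ℝ := f (0, 1) with hc
  have hfdec : ∀ x : X, ∀ t : ℝ, f (x, t) = ℓ x + t * c := by
    intro x t
    have : (x, t) = (x, (0 : ℝ)) + t • ((0 : X), (1 : ℝ)) := by
      simp [Prod.ext_iff]
    rw [this, map_add, map_smul]
    simp [hℓ, hc, smul_eq_mul]
  have hcneg : c < 0 := by
    have := hf (ulim, F ulim + 1) (by simp [hS])
    rw [hfdec, hfdec] at this
    nlinarith
  -- supporting inequality
  have hsupp : ∀ x : X, ℓ x + c * F x ≤ ℓ ulim + c * F ulim := by
    intro x
    by_contra h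
    push_neg at h
    set D : ℝ := ℓ x + c * F x - (ℓ ulim + c * F ulim) with hD
    have hDpos : 0 < D := by linarith
    have hε : 0 < D / (-c) := div_pos hDpos (by linarith)
    have := hf (x, F x + D / (-c)) (show F x < F x + D / (-c) by linarith)
    rw [hfdec, hfdec] at this
    have hcne : c ≠ 0 := ne_of_lt hcneg
    have h0 : D / (-c) * c = -D := by
      rw [div_mul_eq_mul_div, div_neg, mul_div_assoc, div_self hcne, mul_one]
    rw [add_mul, h0] at this
    linarith
  have hdiv : ∀ x : X, F ulim ≤ F x + (ℓ ulim - ℓ x) / (-c) := by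
    intro x
    have h1 := hsupp x
    have hpos : (0:ℝ) < -c := by linarith
    have h2 : F ulim - F x ≤ (ℓ ulim - ℓ x) / (-c) := by
      rw [le_div_iff₀ hpos]; nlinarith
    linarith
  -- now the limit argument
  intro y hy
  obtain ⟨xn, hxn_mem, hxn_lim⟩ := hM1 y hy
  have hxn_tendsto : Tendsto xn atTop (nhds y) := by
    rwa [tendsto_iff_norm_sub_tendsto_zero]
  have hFxn : Tendsto (fun n => F (xn n)) atTop (nhds (F y)) :=
    (hF_cont.tendsto y).comp hxn_tendsto
  have hℓu : Tendsto (fun n => (ℓ ulim - ℓ (u n)) / (-c)) atTop (nhds 0) := by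
    have h1 : Tendsto (fun n => ℓ ulim - ℓ (u n)) atTop (nhds (ℓ ulim - ℓ ulim)) :=
      tendsto_const_nhds.sub (hu_weak ℓ)
    simpa using h1.div_const (-c)
  have hlim : Tendsto (fun n => F (xn n) + (ℓ ulim - ℓ (u n)) / (-c)) atTop
      (nhds (F y)) := by
    simpa using hFxn.add hℓu
  refine le_of_tendsto_of_tendsto tendsto_const_nhds hlim (Eventually.of_forall fun n => ?_)
  calc F ulim ≤ F (u n) + (ℓ ulim - ℓ (u n)) / (-c) := hdiv (u n)
    _ ≤ F (xn n) + (ℓ ulim - ℓ (u n)) / (-c) := by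
        have := hu_min n (xn n) (hxn_mem n)
        linarith
end

section
/- (Shift property of minimizers.) In the abstract trajectory setting, let y ∈ Y, let u ∈ 𝒰(y) be a minimizer of 𝓕 on 𝒰(y), and let T ≥ 0. Then the shifted trajectory S_T u is a minimizer of 𝓕 on 𝒰(u(T)), i.e. 𝓕(S_T u) ≤ 𝓕(w) for every w ∈ 𝒰(u(T)). -/
open MeasureTheory

/-- Translation of a set integral over `Ioi T` to one over `Ioi 0`. -/
lemma integral_Ioi_shift (f : ℝ → ℝ) (T : ℝ) :
    (∫ t in Set.Ioi T, f t) = ∫ s in Set.Ioi (0:ℝ), f (s + T) := by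
  rw [← integral_indicator measurableSet_Ioi, ← integral_indicator measurableSet_Ioi]
  rw [← integral_add_right_eq_self (Set.indicator (Set.Ioi T) f) T]
  congr 1
  funext x
  by_cases hx : (0:ℝ) < x
  · rw [Set.indicator_of_mem (by simpa using hx),
      Set.indicator_of_mem (by simpa using hx)]
  · rw [Set.indicator_of_notMem (by simpa using hx),
      Set.indicator_of_notMem (by simpa using hx)]

/-- Key identity: `∫_{Ioi T} e^{-t} g(t) dt = e^{-T} ∫_{Ici 0} e^{-s} g(s+T) ds`. -/
lemma tail_integral_eq (g : ℝ → ℝ) (T : ℝ) :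
    (∫ t in Set.Ioi T, Real.exp (-t) * g t)
      = Real.exp (-T) * ∫ s in Set.Ici (0:ℝ), Real.exp (-s) * g (s + T) := by
  rw [integral_Ioi_shift, MeasureTheory.integral_Ici_eq_integral_Ioi,
    ← integral_const_mul]
  congr 1
  funext s
  rw [← mul_assoc, ← Real.exp_add]
  ring_nf

/-- Shift property of minimizers (Lemma SL1, first part): if `u` minimizes
`𝓕(w) = ∫₀^∞ e^{-t} F(w(t)) dt` over `𝒰(y)`, then the shift `S_T u` minimizes `𝓕` over
`𝒰(u(T))`. -/
theorem shift_of_minimizer {Y : Type*} (𝒰 : Y → Set (ℝ → Y)) (F : Y → ℝ)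
    (hshift : ∀ y, ∀ u ∈ 𝒰 y, ∀ T : ℝ, 0 ≤ T → (fun t => u (t + T)) ∈ 𝒰 (u T))
    (hconcat : ∀ y, ∀ u ∈ 𝒰 y, ∀ T : ℝ, 0 ≤ T → ∀ v ∈ 𝒰 (u T),
      (fun t => if t ≤ T then u t else v (t - T)) ∈ 𝒰 y)
    (hint : ∀ y, ∀ u ∈ 𝒰 y,
      IntegrableOn (fun t => Real.exp (-t) * F (u t)) (Set.Ici 0))
    (y : Y) (u : ℝ → Y) (hu : u ∈ 𝒰 y)
    (hmin : ∀ w ∈ 𝒰 y,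
      (∫ t in Set.Ici (0:ℝ), Real.exp (-t) * F (u t))
        ≤ ∫ t in Set.Ici (0:ℝ), Real.exp (-t) * F (w t))
    (T : ℝ) (hT : 0 ≤ T) :
    ∀ w ∈ 𝒰 (u T),
      (∫ t in Set.Ici (0:ℝ), Real.exp (-t) * F (u (t + T)))
        ≤ ∫ t in Set.Ici (0:ℝ), Real.exp (-t) * F (w t) := by
  intro w hw
  -- the concatenation
  set c : ℝ → Y := fun t => if t ≤ T then u t else w (t - T) with hc
  have hcU : c ∈ 𝒰 y := hconcat y u hu T hT w hw
  -- splitting of Ici 0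
  have hsplit : Set.Ici (0:ℝ) = Set.Icc 0 T ∪ Set.Ioi T := by
    ext x; simp [Set.mem_Icc, Set.mem_Ioi]
    constructor
    · intro hx
      rcases le_or_gt x T with h | h
      · exact Or.inl ⟨hx, h⟩
      · exact Or.inr h
    · rintro (⟨hx, _⟩ | hx)
      · exact hx
      · linarith
  have hdisj : Disjoint (Set.Icc (0:ℝ) T) (Set.Ioi T) :=
    Set.disjoint_left.mpr (fun x hx hx' => absurd hx.2 (not_le.mpr hx'))
  -- general splitting lemma for trajectories in the family
  have hsplitInt : ∀ v : ℝ → Y, IntegrableOn (fun t => Real.exp (-t) * F (v t)) (Set.Ici 0) →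
      (∫ t in Set.Ici (0:ℝ), Real.exp (-t) * F (v t))
        = (∫ t in Set.Icc (0:ℝ) T, Real.exp (-t) * F (v t))
          + ∫ t in Set.Ioi T, Real.exp (-t) * F (v t) := by
    intro v hv
    rw [hsplit] at hv ⊢
    exact setIntegral_union hdisj measurableSet_Ioi
      (hv.mono_set Set.subset_union_left) (hv.mono_set Set.subset_union_right)
  have hintu := hint y u hu
  have hintc := hint y c hcU
  -- equality of the two integrands on Icc 0 T
  have hIcc : (∫ t in Set.Icc (0:ℝ) T, Real.exp (-t) * F (c t))
      = ∫ t in Set.Icc (0:ℝ) T, Real.exp (-t) * F (u t) := by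
    apply setIntegral_congr_fun measurableSet_Icc
    intro x hx
    simp only [hc, if_pos hx.2]
  -- tail of u
  have htailu : (∫ t in Set.Ioi T, Real.exp (-t) * F (u t))
      = Real.exp (-T) * ∫ s in Set.Ici (0:ℝ), Real.exp (-s) * F (u (s + T)) := by
    have := tail_integral_eq (fun t => F (u t)) T
    simpa using this
  -- tail of c
  have htailc : (∫ t in Set.Ioi T, Real.exp (-t) * F (c t))
      = Real.exp (-T) * ∫ s in Set.Ici (0:ℝ), Real.exp (-s) * F (w s) := by
    have h1 := tail_integral_eq (fun t => F (c t)) T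
    rw [h1]
    congr 1
    rw [MeasureTheory.integral_Ici_eq_integral_Ioi,
      MeasureTheory.integral_Ici_eq_integral_Ioi]
    apply setIntegral_congr_fun measurableSet_Ioi
    intro s hs
    have h : (0:ℝ) < s := hs
    simp only [hc]
    rw [if_neg (by push_neg; linarith)]
    simp
  -- the minimality applied to c
  have hm := hmin c hcU
  rw [hsplitInt u hintu, hsplitInt c hintc, hIcc, htailu, htailc] at hm
  have hm' : Real.exp (-T) * (∫ s in Set.Ici (0:ℝ), Real.exp (-s) * F (u (s + T)))
      ≤ Real.exp (-T) * ∫ s in Set.Ici (0:ℝ), Real.exp (-s) * F (w s) := by linarith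
  exact le_of_mul_le_mul_left hm' (Real.exp_pos _)
end

section
/- (Concatenation property of minimizers.) In the abstract trajectory setting, let y ∈ Y, T ≥ 0, let u ∈ 𝒰(y) be a minimizer of 𝓕 on 𝒰(y), and let v ∈ 𝒰(u(T)) be a minimizer of 𝓕 on 𝒰(u(T)). Then the concatenation u ∪_T v is a minimizer of 𝓕 on 𝒰(y), and 𝓕(u ∪_T v) = 𝓕(u). -/
open MeasureTheory

private lemma shift_integral' (f : ℝ → ℝ) (T : ℝ) :
    (∫ t in Set.Ioi T, f t) = ∫ s in Set.Ioi 0, f (s + T) := by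
  have hmp : MeasurePreserving (fun x : ℝ => x + T) volume volume :=
    measurePreserving_add_right volume T
  have hemb : MeasurableEmbedding (fun x : ℝ => x + T) :=
    (MeasurableEquiv.addRight T).measurableEmbedding
  have := hmp.setIntegral_preimage_emb hemb f (Set.Ioi T)
  rw [← this]
  congr 1
  ext x
  simp [lt_add_iff_pos_left, sub_pos]

private lemma decomp' (G : ℝ → ℝ) (T : ℝ) (hT : 0 ≤ T)
    (hG : IntegrableOn (fun t => Real.exp (-t) * G t) (Set.Ici 0)) :
    (∫ t in Set.Ici (0:ℝ), Real.exp (-t) * G t)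
      = (∫ t in Set.Icc (0:ℝ) T, Real.exp (-t) * G t)
        + Real.exp (-T) * ∫ s in Set.Ioi (0:ℝ), Real.exp (-s) * G (s + T) := by
  have hsub1 : Set.Icc (0:ℝ) T ⊆ Set.Ici 0 := Set.Icc_subset_Ici_self
  have hsub2 : Set.Ioi T ⊆ Set.Ici (0:ℝ) :=
    Set.Ioi_subset_Ici_self.trans (Set.Ici_subset_Ici.2 hT)
  have hdisj : Disjoint (Set.Icc (0:ℝ) T) (Set.Ioi T) := by
    rw [Set.disjoint_left]
    intro a ha ha'
    exact absurd ha.2 (not_le.2 ha')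
  have hsplit : (∫ t in Set.Ici (0:ℝ), Real.exp (-t) * G t)
      = (∫ t in Set.Icc (0:ℝ) T, Real.exp (-t) * G t)
        + ∫ t in Set.Ioi T, Real.exp (-t) * G t := by
    rw [← setIntegral_union hdisj measurableSet_Ioi (hG.mono_set hsub1) (hG.mono_set hsub2),
      Set.Icc_union_Ioi_eq_Ici hT]
  rw [hsplit]
  congr 1
  rw [shift_integral' (fun t => Real.exp (-t) * G t) T]
  rw [← integral_const_mul]
  congr 1
  ext s
  rw [← mul_assoc, ← Real.exp_add]
  ring_nf

/-- Concatenation property of minimizers (Lemma SL1, second part): if `u` minimizes `𝓕`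
over `𝒰(y)` and `v` minimizes `𝓕` over `𝒰(u(T))`, then `u ∪_T v` minimizes `𝓕` over
`𝒰(y)` and `𝓕(u ∪_T v) = 𝓕(u)`. -/
theorem concat_of_minimizers {Y : Type*} (𝒰 : Y → Set (ℝ → Y)) (F : Y → ℝ)
    (hshift : ∀ y, ∀ u ∈ 𝒰 y, ∀ T : ℝ, 0 ≤ T → (fun t => u (t + T)) ∈ 𝒰 (u T))
    (hconcat : ∀ y, ∀ u ∈ 𝒰 y, ∀ T : ℝ, 0 ≤ T → ∀ v ∈ 𝒰 (u T),
      (fun t => if t ≤ T then u t else v (t - T)) ∈ 𝒰 y)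
    (hint : ∀ y, ∀ u ∈ 𝒰 y,
      IntegrableOn (fun t => Real.exp (-t) * F (u t)) (Set.Ici 0))
    (y : Y) (T : ℝ) (hT : 0 ≤ T)
    (u : ℝ → Y) (hu : u ∈ 𝒰 y)
    (humin : ∀ w ∈ 𝒰 y,
      (∫ t in Set.Ici (0:ℝ), Real.exp (-t) * F (u t))
        ≤ ∫ t in Set.Ici (0:ℝ), Real.exp (-t) * F (w t))
    (v : ℝ → Y) (hv : v ∈ 𝒰 (u T))
    (hvmin : ∀ w ∈ 𝒰 (u T),
      (∫ t in Set.Ici (0:ℝ), Real.exp (-t) * F (v t))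
        ≤ ∫ t in Set.Ici (0:ℝ), Real.exp (-t) * F (w t)) :
    (∀ w ∈ 𝒰 y,
      (∫ t in Set.Ici (0:ℝ), Real.exp (-t) * F (if t ≤ T then u t else v (t - T)))
        ≤ ∫ t in Set.Ici (0:ℝ), Real.exp (-t) * F (w t)) ∧
    (∫ t in Set.Ici (0:ℝ), Real.exp (-t) * F (if t ≤ T then u t else v (t - T)))
      = ∫ t in Set.Ici (0:ℝ), Real.exp (-t) * F (u t) := by
  set g : ℝ → Y := fun t => if t ≤ T then u t else v (t - T) with hg_def
  have hg : g ∈ 𝒰 y := hconcat y u hu T hT v hv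
  have hdg := decomp' (fun t => F (g t)) T hT (hint y g hg)
  have hdu := decomp' (fun t => F (u t)) T hT (hint y u hu)
  have hIcc : (∫ t in Set.Icc (0:ℝ) T, Real.exp (-t) * F (g t))
      = ∫ t in Set.Icc (0:ℝ) T, Real.exp (-t) * F (u t) := by
    apply setIntegral_congr_fun measurableSet_Icc
    intro t ht
    simp only [hg_def, if_pos ht.2]
  have hIoi : (∫ s in Set.Ioi (0:ℝ), Real.exp (-s) * F (g (s + T)))
      = ∫ s in Set.Ici (0:ℝ), Real.exp (-s) * F (v s) := by
    rw [MeasureTheory.integral_Ici_eq_integral_Ioi]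
    apply setIntegral_congr_fun measurableSet_Ioi
    intro s hs
    have : ¬ (s + T ≤ T) := by simp at hs ⊢; linarith
    simp only [hg_def, if_neg this, add_sub_cancel_right]
  have hSu : (fun s => u (s + T)) ∈ 𝒰 (u T) := hshift y u hu T hT
  have hvle : (∫ s in Set.Ici (0:ℝ), Real.exp (-s) * F (v s))
      ≤ ∫ s in Set.Ici (0:ℝ), Real.exp (-s) * F (u (s + T)) := hvmin _ hSu
  have hIciIoi : (∫ s in Set.Ici (0:ℝ), Real.exp (-s) * F (u (s + T)))
      = ∫ s in Set.Ioi (0:ℝ), Real.exp (-s) * F (u (s + T)) :=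
    MeasureTheory.integral_Ici_eq_integral_Ioi
  have hle1 : (∫ t in Set.Ici (0:ℝ), Real.exp (-t) * F (g t))
      ≤ ∫ t in Set.Ici (0:ℝ), Real.exp (-t) * F (u t) := by
    rw [hdg, hdu, hIcc, hIoi]
    have : Real.exp (-T) * (∫ s in Set.Ici (0:ℝ), Real.exp (-s) * F (v s))
        ≤ Real.exp (-T) * ∫ s in Set.Ioi (0:ℝ), Real.exp (-s) * F (u (s + T)) := by
      apply mul_le_mul_of_nonneg_left _ (Real.exp_nonneg _)
      rw [← hIciIoi]; exact hvle
    linarith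
  have hle2 : (∫ t in Set.Ici (0:ℝ), Real.exp (-t) * F (u t))
      ≤ ∫ t in Set.Ici (0:ℝ), Real.exp (-t) * F (g t) := humin g hg
  have heq : (∫ t in Set.Ici (0:ℝ), Real.exp (-t) * F (g t))
      = ∫ t in Set.Ici (0:ℝ), Real.exp (-t) * F (u t) := le_antisymm hle1 hle2
  exact ⟨fun w hw => heq ▸ humin w hw, heq⟩
end

section
/- (Shift property of absolute energy minimizers.) In the abstract trajectory setting with energy readout e, let y ∈ Y, let u ∈ 𝒰(y) be an absolute energy minimizer in 𝒰(y), and let T ≥ 0. Then the shifted trajectory S_T u is an absolute energy minimizer in 𝒰(u(T)): for every w ∈ 𝒰(u(T)) there exists λ̄ > 0 such that ∫₀^∞ exp(−λt)·e(u(t+T)) dt ≤ ∫₀^∞ exp(−λt)·e(w(t)) dt for all λ ≥ λ̄. -/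
/-!
Concatenate `u` on `[0, T]` with the competitor `w ∈ 𝒰 (u T)`. The result `z` agrees with `u` on
`[0, T]`, so minimality of `u` against `z` compares only the Laplace integrals over `(T, ∞)`; after
the substitution `t ↦ t + T` these are `exp (λ T)` times the Laplace integrals of `S_T u` and `w`.
-/

open MeasureTheory Set

theorem AntitoneOn.integrableOn_exp_mul_Ioi {f : ℝ → ℝ} {a : ℝ} (hf : AntitoneOn f (Ici a))
    (hf_nonneg : ∀ t ∈ Ici a, 0 ≤ f t) {lam : ℝ} (hlam : 0 < lam) :
    IntegrableOn (fun t => Real.exp (-lam * t) * f t) (Ioi a) := by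
  refine ((exp_neg_integrableOn_Ioi a hlam).mul_const (f a)).mono' ?_ ?_
  · exact ((Real.continuous_exp.comp (continuous_const.mul continuous_id)).aemeasurable.mul
      (aemeasurable_restrict_of_antitoneOn measurableSet_Ioi
        (hf.mono Ioi_subset_Ici_self))).aestronglyMeasurable
  · filter_upwards [ae_restrict_mem measurableSet_Ioi] with t ht
    rw [norm_mul, Real.norm_of_nonneg (Real.exp_pos _).le, Real.norm_of_nonneg (hf_nonneg t (mem_Ici_of_Ioi ht))]
    exact mul_le_mul_of_nonneg_left (hf self_mem_Ici (mem_Ici_of_Ioi ht) (le_of_lt ht)) (Real.exp_pos _).le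

theorem setIntegral_Ioi_comp_add_right {E : Type*} [NormedAddCommGroup E] [NormedSpace ℝ E]
    (g : ℝ → E) (a T : ℝ) : ∫ t in Ioi a, g (t + T) = ∫ t in Ioi (a + T), g t := by
  simpa using (measurePreserving_add_right volume T).setIntegral_preimage_emb
    (measurableEmbedding_addRight T) g (Ioi (a + T))

theorem setIntegral_Ioi_exp_mul_comp_add_right (g : ℝ → ℝ) (lam T : ℝ) :
    ∫ t in Ioi 0, Real.exp (-lam * t) * g (t + T)
      = Real.exp (lam * T) * ∫ t in Ioi T, Real.exp (-lam * t) * g t := by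
  rw [← integral_const_mul, ← zero_add T, ← setIntegral_Ioi_comp_add_right, zero_add]
  congr with t
  rw [← mul_assoc, ← Real.exp_add]
  ring_nf

theorem setIntegral_Ioi_le_of_eqOn_Ioc {f g : ℝ → ℝ} {a b : ℝ} (hf : IntegrableOn f (Ioi a))
    (hg : IntegrableOn g (Ioi a)) (hab : a ≤ b) (hfg : EqOn f g (Ioc a b))
    (h : ∫ t in Ioi a, f t ≤ ∫ t in Ioi a, g t) :
    ∫ t in Ioi b, f t ≤ ∫ t in Ioi b, g t := by
  rw [← intervalIntegral.integral_interval_add_Ioi hf (hf.mono_set (Ioi_subset_Ioi hab)),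
    ← intervalIntegral.integral_interval_add_Ioi hg (hg.mono_set (Ioi_subset_Ioi hab)),
    intervalIntegral.integral_of_le hab, intervalIntegral.integral_of_le hab,
    setIntegral_congr_fun measurableSet_Ioc hfg] at h
  linarith

theorem shift_of_absolute_energy_minimizer_general {Y : Type*}
    (𝒰 : Y → Set (ℝ → Y)) (e : Y → ℝ)
    (hconcat : ∀ y, ∀ u ∈ 𝒰 y, ∀ T : ℝ, 0 ≤ T → ∀ v ∈ 𝒰 (u T),
      (fun t => if t ≤ T then u t else v (t - T)) ∈ 𝒰 y)
    (hmono : ∀ y, ∀ u ∈ 𝒰 y, AntitoneOn (fun t => e (u t)) (Set.Ici 0))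
    (hnonneg : ∀ y, ∀ u ∈ 𝒰 y, ∀ t, 0 ≤ t → 0 ≤ e (u t))
    (y : Y) (u : ℝ → Y) (hu : u ∈ 𝒰 y)
    (habs : ∀ w ∈ 𝒰 y, ∃ lam₀ > (0:ℝ), ∀ lam, lam₀ ≤ lam →
      (∫ t in Set.Ici (0:ℝ), Real.exp (-lam * t) * e (u t))
        ≤ ∫ t in Set.Ici (0:ℝ), Real.exp (-lam * t) * e (w t))
    (T : ℝ) (hT : 0 ≤ T) :
    ∀ w ∈ 𝒰 (u T), ∃ lam₀ > (0:ℝ), ∀ lam, lam₀ ≤ lam →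
      (∫ t in Set.Ici (0:ℝ), Real.exp (-lam * t) * e (u (t + T)))
        ≤ ∫ t in Set.Ici (0:ℝ), Real.exp (-lam * t) * e (w t) := by
  intro w hw
  set z : ℝ → Y := fun t => if t ≤ T then u t else w (t - T)
  have hz : z ∈ 𝒰 y := hconcat y u hu T hT w hw
  obtain ⟨lam₀, hlam₀, hmin⟩ := habs z hz
  refine ⟨lam₀, hlam₀, fun lam hlam => ?_⟩
  have integrable {v : ℝ → Y} (hv : v ∈ 𝒰 y) :=
    (hmono y v hv).integrableOn_exp_mul_Ioi (hnonneg y v hv) (hlam₀.trans_le hlam)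
  have htail : ∫ t in Ioi T, Real.exp (-lam * t) * e (u t)
      ≤ ∫ t in Ioi T, Real.exp (-lam * t) * e (z t) :=
    setIntegral_Ioi_le_of_eqOn_Ioc (integrable hu) (integrable hz) hT
      (fun t ht => by simp [z, ht.2])
      (by simpa only [integral_Ici_eq_integral_Ioi] using hmin lam hlam)
  have hzw : ∫ t in Ioi 0, Real.exp (-lam * t) * e (z (t + T))
      = ∫ t in Ioi 0, Real.exp (-lam * t) * e (w t) :=
    setIntegral_congr_fun measurableSet_Ioi fun t (ht : 0 < t) => by simp [z, ht.not_ge]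
  rw [integral_Ici_eq_integral_Ioi, integral_Ici_eq_integral_Ioi, ← hzw,
    setIntegral_Ioi_exp_mul_comp_add_right (fun t => e (u t)),
    setIntegral_Ioi_exp_mul_comp_add_right (fun t => e (z t))]
  gcongr

/-- Shift property of absolute energy minimizers (Proposition AL1, first part). -/
theorem shift_of_absolute_energy_minimizer {Y : Type*}
    (𝒰 : Y → Set (ℝ → Y)) (e : Y → ℝ)
    (hshift : ∀ y, ∀ u ∈ 𝒰 y, ∀ T : ℝ, 0 ≤ T → (fun t => u (t + T)) ∈ 𝒰 (u T))
    (hconcat : ∀ y, ∀ u ∈ 𝒰 y, ∀ T : ℝ, 0 ≤ T → ∀ v ∈ 𝒰 (u T),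
      (fun t => if t ≤ T then u t else v (t - T)) ∈ 𝒰 y)
    (hmono : ∀ y, ∀ u ∈ 𝒰 y, AntitoneOn (fun t => e (u t)) (Set.Ici 0))
    (hnonneg : ∀ y, ∀ u ∈ 𝒰 y, ∀ t, 0 ≤ t → 0 ≤ e (u t))
    (y : Y) (u : ℝ → Y) (hu : u ∈ 𝒰 y)
    (habs : ∀ w ∈ 𝒰 y, ∃ lam₀ > (0:ℝ), ∀ lam, lam₀ ≤ lam →
      (∫ t in Set.Ici (0:ℝ), Real.exp (-lam * t) * e (u t))
        ≤ ∫ t in Set.Ici (0:ℝ), Real.exp (-lam * t) * e (w t))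
    (T : ℝ) (hT : 0 ≤ T) :
    ∀ w ∈ 𝒰 (u T), ∃ lam₀ > (0:ℝ), ∀ lam, lam₀ ≤ lam →
      (∫ t in Set.Ici (0:ℝ), Real.exp (-lam * t) * e (u (t + T)))
        ≤ ∫ t in Set.Ici (0:ℝ), Real.exp (-lam * t) * e (w t) :=
  shift_of_absolute_energy_minimizer_general 𝒰 e hconcat hmono hnonneg y u hu habs T hT
end

section
/- (Concatenation property of absolute energy minimizers.) In the abstract trajectory setting with energy readout e, let y ∈ Y, T ≥ 0, let u ∈ 𝒰(y) be an absolute energy minimizer in 𝒰(y), and let v ∈ 𝒰(u(T)) be an absolute energy minimizer in 𝒰(u(T)). Then the concatenation u ∪_T v is an absolute energy minimizer in 𝒰(y). -/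
/-!
On `[0, T]` the concatenation `u ∪_T v` agrees with `u`, and on `(T, ∞)` the substitution
`t = s + T` turns its weighted energy into `exp (-λT)` times that of `v`, while the same
substitution turns the tail of `u` into `exp (-λT)` times the weighted energy of `S_T u ∈ 𝒰 (u T)`.
So for `λ` large, minimality of `v` against `S_T u` gives `u ∪_T v ≤ u`, and minimality of `u`
gives `u ≤ w`. Integrability of the weighted energies comes from `e ∘ u` being antitone and
nonnegative, applied to `u` and, through the concatenation property, to `u ∪_T v`.
-/

open MeasureTheory Set

lemma integrableOn_Ici_exp_mul_of_antitoneOn {f : ℝ → ℝ} {a lam : ℝ}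
    (hf : AntitoneOn f (Ici a)) (hf_nonneg : ∀ t, a ≤ t → 0 ≤ f t) (hlam : 0 < lam) :
    IntegrableOn (fun t => Real.exp (-lam * t) * f t) (Ici a) := by
  have hdom : IntegrableOn (fun t => f a * Real.exp (-lam * t)) (Ici a) :=
    (integrableOn_Ici_iff_integrableOn_Ioi).2 ((exp_neg_integrableOn_Ioi a hlam).const_mul _)
  refine hdom.mono' ((by fun_prop : Measurable fun t => Real.exp (-lam * t)).aemeasurable.mul
    (aemeasurable_restrict_of_antitoneOn measurableSet_Ici hf)).aestronglyMeasurable ?_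
  filter_upwards [ae_restrict_mem measurableSet_Ici] with t ht
  rw [Real.norm_eq_abs, abs_of_nonneg (mul_nonneg (Real.exp_pos _).le (hf_nonneg t ht)),
    mul_comm (f a)]
  exact mul_le_mul_of_nonneg_left (hf self_mem_Ici ht ht) (Real.exp_pos _).le

lemma setIntegral_Ioi_comp_sub_right {E : Type*} [NormedAddCommGroup E] [NormedSpace ℝ E]
    (g : ℝ → E) (T : ℝ) : ∫ t in Ioi T, g (t - T) = ∫ s in Ioi 0, g s := by
  have := (measurePreserving_add_right volume T).setIntegral_preimage_emb
    (measurableEmbedding_addRight T) (fun t => g (t - T)) (Ioi T)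
  simpa using this.symm

section Concatenation

variable {X : Type*} (f : X → ℝ) (u v : ℝ → X) {T : ℝ} (lam : ℝ)

lemma setIntegral_Ici_exp_mul_concat (hT : 0 ≤ T)
    (hint : IntegrableOn
      (fun t => Real.exp (-lam * t) * f (if t ≤ T then u t else v (t - T))) (Ici 0)) :
    ∫ t in Ici 0, Real.exp (-lam * t) * f (if t ≤ T then u t else v (t - T))
      = (∫ t in Icc 0 T, Real.exp (-lam * t) * f (u t))
        + Real.exp (-lam * T) * ∫ s in Ici 0, Real.exp (-lam * s) * f (v s) := by
  have hdisj : Disjoint (Icc (0:ℝ) T) (Ioi T) :=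
    disjoint_left.2 fun _ hx hx' => not_le.2 hx' hx.2
  conv_lhs => rw [← Icc_union_Ioi_eq_Ici hT, setIntegral_union hdisj measurableSet_Ioi
    (hint.mono_set Icc_subset_Ici_self) (hint.mono_set (Ioi_subset_Ici hT))]
  congr 1
  · refine setIntegral_congr_fun measurableSet_Icc fun t ht => ?_
    simp only [if_pos ht.2]
  · calc ∫ t in Ioi T, Real.exp (-lam * t) * f (if t ≤ T then u t else v (t - T))
        = ∫ t in Ioi T, Real.exp (-lam * T) * (Real.exp (-lam * (t - T)) * f (v (t - T))) := by
          refine setIntegral_congr_fun measurableSet_Ioi fun t ht => ?_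
          simp only [if_neg (not_le.2 (mem_Ioi.1 ht)), ← mul_assoc, ← Real.exp_add]
          ring_nf
      _ = Real.exp (-lam * T) * ∫ s in Ici 0, Real.exp (-lam * s) * f (v s) := by
          rw [integral_const_mul, integral_Ici_eq_integral_Ioi,
            setIntegral_Ioi_comp_sub_right (fun s => Real.exp (-lam * s) * f (v s))]

lemma setIntegral_Ici_exp_mul_concat_le_of_le (hT : 0 ≤ T)
    (hint_concat : IntegrableOn
      (fun t => Real.exp (-lam * t) * f (if t ≤ T then u t else v (t - T))) (Ici 0))
    (hint_u : IntegrableOn (fun t => Real.exp (-lam * t) * f (u t)) (Ici 0))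
    (hle : ∫ s in Ici 0, Real.exp (-lam * s) * f (v s)
      ≤ ∫ s in Ici 0, Real.exp (-lam * s) * f (u (s + T))) :
    ∫ t in Ici 0, Real.exp (-lam * t) * f (if t ≤ T then u t else v (t - T))
      ≤ ∫ t in Ici 0, Real.exp (-lam * t) * f (u t) := by
  -- `u = u ∪_T S_T u`
  have hu_concat : (fun t => Real.exp (-lam * t) * f (u t))
      = fun t => Real.exp (-lam * t) * f (if t ≤ T then u t else u (t - T + T)) := by
    simp only [sub_add_cancel, ite_self]
  rw [hu_concat] at hint_u ⊢
  rw [setIntegral_Ici_exp_mul_concat f u v lam hT hint_concat,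
    setIntegral_Ici_exp_mul_concat f u (fun s => u (s + T)) lam hT hint_u]
  gcongr

end Concatenation

/-- Concatenation property of absolute energy minimizers (Proposition AL1, second part). -/
theorem concat_of_absolute_energy_minimizers {Y : Type*}
    (𝒰 : Y → Set (ℝ → Y)) (e : Y → ℝ)
    (hshift : ∀ y, ∀ u ∈ 𝒰 y, ∀ T : ℝ, 0 ≤ T → (fun t => u (t + T)) ∈ 𝒰 (u T))
    (hconcat : ∀ y, ∀ u ∈ 𝒰 y, ∀ T : ℝ, 0 ≤ T → ∀ v ∈ 𝒰 (u T),
      (fun t => if t ≤ T then u t else v (t - T)) ∈ 𝒰 y)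
    (hmono : ∀ y, ∀ u ∈ 𝒰 y, AntitoneOn (fun t => e (u t)) (Set.Ici 0))
    (hnonneg : ∀ y, ∀ u ∈ 𝒰 y, ∀ t, 0 ≤ t → 0 ≤ e (u t))
    (y : Y) (T : ℝ) (hT : 0 ≤ T)
    (u : ℝ → Y) (hu : u ∈ 𝒰 y)
    (huabs : ∀ w ∈ 𝒰 y, ∃ lam₀ > (0:ℝ), ∀ lam, lam₀ ≤ lam →
      (∫ t in Set.Ici (0:ℝ), Real.exp (-lam * t) * e (u t))
        ≤ ∫ t in Set.Ici (0:ℝ), Real.exp (-lam * t) * e (w t))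
    (v : ℝ → Y) (hv : v ∈ 𝒰 (u T))
    (hvabs : ∀ w ∈ 𝒰 (u T), ∃ lam₀ > (0:ℝ), ∀ lam, lam₀ ≤ lam →
      (∫ t in Set.Ici (0:ℝ), Real.exp (-lam * t) * e (v t))
        ≤ ∫ t in Set.Ici (0:ℝ), Real.exp (-lam * t) * e (w t)) :
    ∀ w ∈ 𝒰 y, ∃ lam₀ > (0:ℝ), ∀ lam, lam₀ ≤ lam →
      (∫ t in Set.Ici (0:ℝ),
          Real.exp (-lam * t) * e (if t ≤ T then u t else v (t - T)))
        ≤ ∫ t in Set.Ici (0:ℝ), Real.exp (-lam * t) * e (w t) := by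
  intro w hw
  obtain ⟨lam₁, hlam₁, hv_le_shift⟩ := hvabs _ (hshift y u hu T hT)
  obtain ⟨lam₂, -, hu_le_w⟩ := huabs w hw
  refine ⟨max lam₁ lam₂, lt_max_of_lt_left hlam₁, fun lam hlam => ?_⟩
  have hlam_pos : 0 < lam := hlam₁.trans_le (le_of_max_le_left hlam)
  have hcat := hconcat y u hu T hT v hv
  calc _ ≤ ∫ t in Ici 0, Real.exp (-lam * t) * e (u t) :=
        setIntegral_Ici_exp_mul_concat_le_of_le e u v lam hT
          (integrableOn_Ici_exp_mul_of_antitoneOn (hmono y _ hcat) (hnonneg y _ hcat) hlam_pos)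
          (integrableOn_Ici_exp_mul_of_antitoneOn (hmono y u hu) (hnonneg y u hu) hlam_pos)
          (hv_le_shift lam (le_of_max_le_left hlam))
    _ ≤ _ := hu_le_w lam (le_of_max_le_right hlam)
end

section
/- (Energy uniqueness of absolute energy minimizers.) In the abstract trajectory setting with energy readout e, suppose additionally that for every y ∈ Y and u ∈ 𝒰(y) the function t ↦ e(u(t)) is bounded. If u¹ and u² are both absolute energy minimizers in the same set 𝒰(y), then e(u¹(t)) = e(u²(t)) for Lebesgue-almost every t ∈ [0,∞). -/
/-!
Put `H = e^{-Λt} (e ∘ u₁ - e ∘ u₂)` for `Λ` beyond both thresholds of minimality. Each minimizer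
has Laplace transform at most the other's for large `λ`, so the transforms agree and the
"moments" `∫₀^∞ (e^{-t})ⁿ H(t) dt` are the differences of the transforms at `Λ + n`, hence zero.
By Weierstrass approximation on `[0, 1]` (in the variable `x = e^{-t}`), `∫₀^∞ φ(e^{-t}) H(t) dt`
vanishes for every continuous `φ`; taking `φ(x) = g(-log x)` for smooth `g` compactly supported
in `(0, ∞)` shows that `H` vanishes as a distribution there, hence almost everywhere (Lerch).
-/

open MeasureTheory Set Filter Real

noncomputable def laplace (f : ℝ → ℝ) (s : ℝ) : ℝ :=
  ∫ t in Ici (0 : ℝ), exp (-s * t) * f t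

lemma exp_neg_mem_Icc {t : ℝ} (ht : 0 ≤ t) : exp (-t) ∈ Icc (0 : ℝ) 1 :=
  ⟨(exp_pos _).le, exp_le_one_iff.2 (neg_nonpos.2 ht)⟩

lemma HasCompactSupport.continuous_comp_neg_log {g : ℝ → ℝ} (hg : Continuous g)
    (hgc : HasCompactSupport g) (hg0 : g 0 = 0) : Continuous fun x => g (-log x) := by
  refine continuous_iff_continuousAt.2 fun x => ?_
  rcases eq_or_ne x 0 with rfl | hx
  · -- `-log x → ∞` as `x → 0`, where `g` tends to `0`; at `x = 0` itself, `-log 0 = 0`.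
    refine continuousWithinAt_compl_self.1 ?_
    rw [ContinuousWithinAt, log_zero, neg_zero, hg0]
    exact hgc.is_zero_at_infty.comp
      ((tendsto_neg_atBot_atTop.comp tendsto_log_nhdsNE_zero).mono_right atTop_le_cocompact)
  · exact hg.continuousAt.comp (continuousAt_log hx).neg

section Lerch

variable {H : ℝ → ℝ}

lemma integrableOn_comp_exp_neg_mul {φ : ℝ → ℝ} (hφ : ContinuousOn φ (Icc 0 1))
    (hH : IntegrableOn H (Ici 0)) :
    IntegrableOn (fun t => φ (exp (-t)) * H t) (Ici 0) := by
  obtain ⟨M, hM⟩ := isCompact_Icc.exists_bound_of_continuousOn hφ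
  have hφexp : ContinuousOn (fun t => φ (exp (-t))) (Ici 0) :=
    hφ.comp (by fun_prop) fun t ht => exp_neg_mem_Icc ht
  refine hH.bdd_mul (c := M) (hφexp.aestronglyMeasurable measurableSet_Ici) ?_
  exact (ae_restrict_iff' measurableSet_Ici).2 (.of_forall fun t ht => hM _ (exp_neg_mem_Icc ht))

lemma integral_eval_exp_neg_mul_eq_zero (hH : IntegrableOn H (Ici 0))
    (hmom : ∀ n : ℕ, ∫ t in Ici 0, exp (-t) ^ n * H t = 0) (p : Polynomial ℝ) :
    ∫ t in Ici 0, p.eval (exp (-t)) * H t = 0 := by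
  induction p using Polynomial.induction_on' with
  | add p q hp hq =>
    simp only [Polynomial.eval_add, add_mul]
    rw [integral_add (integrableOn_comp_exp_neg_mul p.continuousOn hH)
      (integrableOn_comp_exp_neg_mul q.continuousOn hH), hp, hq, add_zero]
  | monomial n a =>
    simp only [Polynomial.eval_monomial, mul_assoc]
    rw [integral_const_mul, hmom n, mul_zero]

lemma integral_comp_exp_neg_mul_eq_zero (hH : IntegrableOn H (Ici 0))
    (hmom : ∀ n : ℕ, ∫ t in Ici 0, exp (-t) ^ n * H t = 0) {φ : ℝ → ℝ}
    (hφ : ContinuousOn φ (Icc 0 1)) :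
    ∫ t in Ici 0, φ (exp (-t)) * H t = 0 := by
  set c := ∫ t in Ici 0, |H t|
  have hc : 0 ≤ c := setIntegral_nonneg measurableSet_Ici fun t _ => abs_nonneg _
  refine eq_of_forall_dist_le fun ε hε => ?_
  obtain ⟨p, hp⟩ := exists_polynomial_near_of_continuousOn 0 1 φ hφ (ε / (c + 1))
    (by positivity)
  have hdiff : ∫ t in Ici 0, φ (exp (-t)) * H t
      = ∫ t in Ici 0, (φ (exp (-t)) - p.eval (exp (-t))) * H t := by
    simp only [sub_mul]
    rw [integral_sub (integrableOn_comp_exp_neg_mul hφ hH)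
      (integrableOn_comp_exp_neg_mul p.continuousOn hH),
      integral_eval_exp_neg_mul_eq_zero hH hmom, sub_zero]
  calc dist (∫ t in Ici 0, φ (exp (-t)) * H t) 0
      = ‖∫ t in Ici 0, (φ (exp (-t)) - p.eval (exp (-t))) * H t‖ := by
        rw [dist_zero_right, hdiff]
    _ ≤ ∫ t in Ici 0, ε / (c + 1) * |H t| := by
        refine norm_integral_le_of_norm_le (hH.abs.const_mul _)
          ((ae_restrict_iff' measurableSet_Ici).2 (.of_forall fun t ht => ?_))
        rw [norm_mul, norm_eq_abs, norm_eq_abs, abs_sub_comm]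
        exact mul_le_mul_of_nonneg_right (hp _ (exp_neg_mem_Icc ht)).le (abs_nonneg _)
    _ = ε * (c / (c + 1)) := by rw [integral_const_mul]; ring
    _ ≤ ε := mul_le_of_le_one_right hε.le ((div_le_one (by positivity)).2 (by linarith))

lemma integral_mul_eq_zero_of_tsupport_subset_Ioi (hH : IntegrableOn H (Ici 0))
    (hmom : ∀ n : ℕ, ∫ t in Ici 0, exp (-t) ^ n * H t = 0) {g : ℝ → ℝ} (hg : Continuous g)
    (hgc : HasCompactSupport g) (hgU : tsupport g ⊆ Ioi 0) :
    ∫ t in Ici 0, g t * H t = 0 := by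
  have hg0 : g 0 = 0 := image_eq_zero_of_notMem_tsupport fun h => lt_irrefl (0 : ℝ) (hgU h)
  simpa only [log_exp, neg_neg] using integral_comp_exp_neg_mul_eq_zero hH hmom
    (hgc.continuous_comp_neg_log hg hg0).continuousOn

theorem ae_eq_zero_of_integral_exp_neg_pow_mul_eq_zero (hH : IntegrableOn H (Ici 0))
    (hmom : ∀ n : ℕ, ∫ t in Ici 0, exp (-t) ^ n * H t = 0) :
    ∀ᵐ t ∂volume.restrict (Ici 0), H t = 0 := by
  have hU := isOpen_Ioi.ae_eq_zero_of_integral_contDiff_smul_eq_zero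
    (hH.integrable.locallyIntegrable.locallyIntegrableOn (Ioi 0)) fun g hg hgc hgU =>
      integral_mul_eq_zero_of_tsupport_subset_Ioi hH hmom hg.continuous hgc hgU
  rw [← restrict_Ioi_eq_restrict_Ici] at hU ⊢
  filter_upwards [hU, ae_restrict_mem measurableSet_Ioi] with t ht ht0 using ht ht0

end Lerch

lemma integrableOn_exp_neg_mul_mul_of_bound {f : ℝ → ℝ}
    (hf : AEStronglyMeasurable f (volume.restrict (Ici 0))) {C : ℝ}
    (hC : ∀ t, 0 ≤ t → ‖f t‖ ≤ C) {s : ℝ} (hs : 0 < s) :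
    IntegrableOn (fun t => exp (-s * t) * f t) (Ici 0) := by
  refine Integrable.mul_bdd (c := C) ?_ hf
    ((ae_restrict_iff' measurableSet_Ici).2 (.of_forall hC))
  exact (integrableOn_Ici_iff_integrableOn_Ioi).2 (exp_neg_integrableOn_Ioi 0 hs)

lemma MeasureTheory.IntegrableOn.exp_neg_mul_mul_of_le {f : ℝ → ℝ} {s₀ s : ℝ}
    (hf : IntegrableOn (fun t => exp (-s₀ * t) * f t) (Ici 0)) (hs : s₀ ≤ s) :
    IntegrableOn (fun t => exp (-s * t) * f t) (Ici 0) := by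
  have hbdd : ∀ᵐ t ∂volume.restrict (Ici 0), ‖exp (-(s - s₀) * t)‖ ≤ 1 :=
    (ae_restrict_iff' measurableSet_Ici).2 (.of_forall fun t ht => by
      rw [norm_of_nonneg (exp_pos _).le, exp_le_one_iff]
      nlinarith [mem_Ici.1 ht])
  refine IntegrableOn.congr_fun (hf.bdd_mul (by fun_prop) hbdd) (fun t _ => ?_) measurableSet_Ici
  rw [← mul_assoc, ← exp_add]
  ring_nf

lemma laplace_sub {f g : ℝ → ℝ} {s : ℝ} (hf : IntegrableOn (fun t => exp (-s * t) * f t) (Ici 0))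
    (hg : IntegrableOn (fun t => exp (-s * t) * g t) (Ici 0)) :
    laplace (f - g) s = laplace f s - laplace g s := by
  simp only [laplace, Pi.sub_apply, mul_sub]
  exact integral_sub hf hg

theorem ae_eq_zero_of_laplace_eventually_eq_zero {f : ℝ → ℝ} {s₀ : ℝ}
    (hf : IntegrableOn (fun t => exp (-s₀ * t) * f t) (Ici 0))
    (h : ∀ᶠ s in atTop, laplace f s = 0) :
    ∀ᵐ t ∂volume.restrict (Ici 0), f t = 0 := by
  obtain ⟨s, hs⟩ := (h.and (eventually_ge_atTop s₀)).exists_forall_of_atTop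
  have hH := hf.exp_neg_mul_mul_of_le (hs s le_rfl).2
  have hmom (n : ℕ) : ∫ t in Ici 0, exp (-t) ^ n * (exp (-s * t) * f t) = 0 := by
    refine Eq.trans (setIntegral_congr_fun measurableSet_Ici fun t _ => ?_) (hs (s + n) (by simp)).1
    rw [← exp_nat_mul, ← mul_assoc, ← exp_add]
    ring_nf
  filter_upwards [ae_eq_zero_of_integral_exp_neg_pow_mul_eq_zero hH hmom] with t ht
  exact (mul_eq_zero.1 ht).resolve_left (exp_pos _).ne'

theorem ae_eq_of_laplace_eventually_eq {f g : ℝ → ℝ} {s₀ : ℝ}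
    (hf : IntegrableOn (fun t => exp (-s₀ * t) * f t) (Ici 0))
    (hg : IntegrableOn (fun t => exp (-s₀ * t) * g t) (Ici 0))
    (h : ∀ᶠ s in atTop, laplace f s = laplace g s) :
    f =ᵐ[volume.restrict (Ici 0)] g := by
  have hsub : ∀ᶠ s in atTop, laplace (f - g) s = 0 := by
    filter_upwards [h, eventually_ge_atTop s₀] with s hs hs₀
    rw [laplace_sub (hf.exp_neg_mul_mul_of_le hs₀) (hg.exp_neg_mul_mul_of_le hs₀), hs, sub_self]
  have hfg : IntegrableOn (fun t => exp (-s₀ * t) * (f - g) t) (Ici 0) :=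
    (hf.sub hg).congr_fun (fun t _ => (mul_sub _ _ _).symm) measurableSet_Ici
  filter_upwards [ae_eq_zero_of_laplace_eventually_eq_zero hfg hsub] with t ht
  exact sub_eq_zero.1 ht

/-- Energy uniqueness of absolute energy minimizers (Theorem AT1, uniqueness of the energy
component): two absolute energy minimizers in the same solution set have a.e. equal energy
profiles. -/
theorem absolute_energy_minimizer_energy_unique {Y : Type*}
    (𝒰 : Y → Set (ℝ → Y)) (e : Y → ℝ)
    (hmono : ∀ y, ∀ u ∈ 𝒰 y, AntitoneOn (fun t => e (u t)) (Set.Ici 0))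
    (hnonneg : ∀ y, ∀ u ∈ 𝒰 y, ∀ t, 0 ≤ t → 0 ≤ e (u t))
    (hbdd : ∀ y, ∀ u ∈ 𝒰 y, ∃ C, ∀ t, 0 ≤ t → e (u t) ≤ C)
    (y : Y) (u₁ u₂ : ℝ → Y) (hu₁ : u₁ ∈ 𝒰 y) (hu₂ : u₂ ∈ 𝒰 y)
    (habs₁ : ∀ w ∈ 𝒰 y, ∃ lam₀ > (0:ℝ), ∀ lam, lam₀ ≤ lam →
      (∫ t in Set.Ici (0:ℝ), Real.exp (-lam * t) * e (u₁ t))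
        ≤ ∫ t in Set.Ici (0:ℝ), Real.exp (-lam * t) * e (w t))
    (habs₂ : ∀ w ∈ 𝒰 y, ∃ lam₀ > (0:ℝ), ∀ lam, lam₀ ≤ lam →
      (∫ t in Set.Ici (0:ℝ), Real.exp (-lam * t) * e (u₂ t))
        ≤ ∫ t in Set.Ici (0:ℝ), Real.exp (-lam * t) * e (w t)) :
    ∀ᵐ t ∂(volume.restrict (Set.Ici (0:ℝ))), e (u₁ t) = e (u₂ t) := by
  have hint : ∀ u ∈ 𝒰 y, IntegrableOn (fun t => exp (-1 * t) * e (u t)) (Ici 0) := by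
    intro u hu
    obtain ⟨C, hC⟩ := hbdd y u hu
    refine integrableOn_exp_neg_mul_mul_of_bound (C := C)
      (aemeasurable_restrict_of_antitoneOn measurableSet_Ici (hmono y u hu)).aestronglyMeasurable
      (fun t ht => ?_) one_pos
    rw [norm_of_nonneg (hnonneg y u hu t ht)]
    exact hC t ht
  have hlaplace : ∀ᶠ s in atTop, laplace (fun t => e (u₁ t)) s = laplace (fun t => e (u₂ t)) s := by
    obtain ⟨s₁, -, h₁⟩ := habs₁ u₂ hu₂
    obtain ⟨s₂, -, h₂⟩ := habs₂ u₁ hu₁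
    filter_upwards [eventually_ge_atTop s₁, eventually_ge_atTop s₂] with s hs₁ hs₂
    exact (h₁ s hs₁).antisymm (h₂ s hs₂)
  exact ae_eq_of_laplace_eventually_eq (hint u₁ hu₁) (hint u₂ hu₂) hlaplace
end
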